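/- Let F : B(H_A) → B(H_C) and G : B(H_B) → B(H_C) be registers of the form F(a) = W(a ⊗ 1_{H_B})W* and G(b) = W(1_{H_A} ⊗ b)W* for a unitary W : H_A ⊗ H_B → H_C (finite-dimensional spaces). Then the range of G equals the commutant of the range of F, i.e., G(B(H_B)) = { x ∈ B(H_C) : ∀ a, x·F(a) = F(a)·x }. -/

import Mathlib

open Kronecker Matrix

/-!
Conjugation by `W` is multiplicative and bijective, so it suffices to treat `W = 1`. Then
`1 ⊗ b` visibly commutes with `a ⊗ 1`, and conversely testing commutation of `y` against the
matrix units `E i j ⊗ 1` forces `y (p, q) (r, s) = δ p r • y (i₀, q) (i₀, s)`.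
-/

namespace Matrix

section Conjugation

variable {R : Type*} [Semiring R] {m n : Type*} [Fintype m] [Fintype n]
  {U : Matrix m n R} {V : Matrix n m R}

lemma conj_mul_conj [DecidableEq n] (hVU : V * U = 1) (p q : Matrix n n R) :
    U * p * V * (U * q * V) = U * (p * q) * V := by
  simp only [Matrix.mul_assoc, ← Matrix.mul_assoc V U, hVU, Matrix.one_mul]

lemma conj_conj [DecidableEq m] (hUV : U * V = 1) (x : Matrix m m R) :
    U * (V * x * U) * V = x := by
  simp only [Matrix.mul_assoc, hUV, Matrix.mul_one, ← Matrix.mul_assoc U V, Matrix.one_mul]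

lemma commute_conj_iff [DecidableEq m] [DecidableEq n] (hVU : V * U = 1) (hUV : U * V = 1)
    (x : Matrix m m R) (a : Matrix n n R) : Commute x (U * a * V) ↔ Commute (V * x * U) a := by
  rw [commute_iff_eq, commute_iff_eq]
  constructor
  · intro h
    have h' := congrArg (fun z => V * z * U) h
    simpa only [Matrix.mul_assoc, ← Matrix.mul_assoc V U, hVU, Matrix.one_mul,
      Matrix.mul_one] using h'
  · intro h
    rw [← conj_conj hUV x, conj_mul_conj hVU, conj_mul_conj hVU, h]

end Conjugation

section Kronecker

variable {R : Type*} [CommSemiring R] {ι κ : Type*} [Fintype ι] [Fintype κ]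
  [DecidableEq ι] [DecidableEq κ]

lemma commute_one_kronecker_kronecker_one (a : Matrix ι ι R) (b : Matrix κ κ R) :
    Commute ((1 : Matrix ι ι R) ⊗ₖ b) (a ⊗ₖ (1 : Matrix κ κ R)) := by
  simp only [Commute, SemiconjBy, ← mul_kronecker_mul, Matrix.one_mul, Matrix.mul_one]

lemma mul_single_kronecker_one_apply (y : Matrix (ι × κ) (ι × κ) R) (i j p r : ι) (q s : κ) :
    (y * (single i j (1 : R) ⊗ₖ (1 : Matrix κ κ R)) : Matrix (ι × κ) (ι × κ) R)
        (p, q) (r, s) =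
      if j = r then y (p, q) (i, s) else 0 := by
  simp [mul_apply, kroneckerMap_apply, one_apply, single, Fintype.sum_prod_type, mul_ite,
    ite_and, Finset.sum_ite_eq']

lemma single_kronecker_one_mul_apply (y : Matrix (ι × κ) (ι × κ) R) (i j p r : ι) (q s : κ) :
    ((single i j (1 : R) ⊗ₖ (1 : Matrix κ κ R)) * y : Matrix (ι × κ) (ι × κ) R)
        (p, q) (r, s) =
      if i = p then y (j, q) (r, s) else 0 := by
  simp [mul_apply, kroneckerMap_apply, one_apply, single, Fintype.sum_prod_type, ite_mul,
    ite_and, Finset.sum_ite_eq]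

lemma exists_eq_one_kronecker_of_commute (y : Matrix (ι × κ) (ι × κ) R)
    (hy : ∀ a : Matrix ι ι R, Commute y (a ⊗ₖ (1 : Matrix κ κ R))) :
    ∃ b : Matrix κ κ R, y = 1 ⊗ₖ b := by
  have hentry (i j p r : ι) (q s : κ) :
      (if j = r then y (p, q) (i, s) else 0) = if i = p then y (j, q) (r, s) else 0 := by
    rw [← mul_single_kronecker_one_apply, ← single_kronecker_one_mul_apply, (hy _).eq]
  cases isEmpty_or_nonempty ι with
  | inl _ => exact ⟨1, Subsingleton.elim _ _⟩
  | inr hι =>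
    obtain ⟨i₀⟩ := hι
    refine ⟨of fun q s => y (i₀, q) (i₀, s), ?_⟩
    ext ⟨p, q⟩ ⟨r, s⟩
    rw [kroneckerMap_apply, one_apply, of_apply]
    by_cases hpr : p = r
    · subst hpr
      simpa using hentry p i₀ p i₀ q s
    · simpa [hpr, Ne.symm hpr] using hentry r r p r q s

end Kronecker

end Matrix

theorem range_complement_eq_commutant_general {n m k : ℕ}
    (W : Matrix (Fin k) (Fin n × Fin m) ℂ)
    (hW : Wᴴ * W = 1 ∧ W * Wᴴ = 1)
    (F : Matrix (Fin n) (Fin n) ℂ → Matrix (Fin k) (Fin k) ℂ)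
    (G : Matrix (Fin m) (Fin m) ℂ → Matrix (Fin k) (Fin k) ℂ)
    (hF : ∀ a, F a = W * (a ⊗ₖ (1 : Matrix (Fin m) (Fin m) ℂ)) * Wᴴ)
    (hG : ∀ b, G b = W * ((1 : Matrix (Fin n) (Fin n) ℂ) ⊗ₖ b) * Wᴴ) :
    Set.range G = { x : Matrix (Fin k) (Fin k) ℂ | ∀ a, x * F a = F a * x } := by
  obtain ⟨hWstarW, hWWstar⟩ := hW
  ext x
  constructor
  · rintro ⟨b, rfl⟩ a
    rw [hG, hF, conj_mul_conj hWstarW, conj_mul_conj hWstarW,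
      (commute_one_kronecker_kronecker_one a b).eq]
  · intro hx
    have hy : ∀ a, Commute (Wᴴ * x * W) (a ⊗ₖ (1 : Matrix (Fin m) (Fin m) ℂ)) := fun a =>
      (commute_conj_iff hWstarW hWWstar x _).mp (hF a ▸ hx a)
    obtain ⟨b, hb⟩ := exists_eq_one_kronecker_of_commute _ hy
    exact ⟨b, by rw [hG, ← hb, conj_conj hWWstar]⟩

/-- For complementary registers `F a = W (a ⊗ 1) W*` and `G b = W (1 ⊗ b) W*`
(with `W` unitary), the range of `G` is the commutant of the range of `F`. -/
theorem range_complement_eq_commutant {n m k : ℕ}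
    (hn : 0 < n) (hm : 0 < m) (hk : 0 < k)
    (W : Matrix (Fin k) (Fin n × Fin m) ℂ)
    (hW : Wᴴ * W = 1 ∧ W * Wᴴ = 1)
    (F : Matrix (Fin n) (Fin n) ℂ → Matrix (Fin k) (Fin k) ℂ)
    (G : Matrix (Fin m) (Fin m) ℂ → Matrix (Fin k) (Fin k) ℂ)
    (hF : ∀ a, F a = W * (a ⊗ₖ (1 : Matrix (Fin m) (Fin m) ℂ)) * Wᴴ)
    (hG : ∀ b, G b = W * ((1 : Matrix (Fin n) (Fin n) ℂ) ⊗ₖ b) * Wᴴ) :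
    Set.range G = { x : Matrix (Fin k) (Fin k) ℂ | ∀ a, x * F a = F a * x } :=
  range_complement_eq_commutant_general W hW F G hF hG
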